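/- Small-r two-sided asymptotics for the nonlinearity of the Φ equation: there exist constants c > 0 and C > 0 such that for all r ∈ (0, 1/2] and all v ≥ 0 with r v ≤ 1, c (v³ + v⁴) ≤ ∫₀^v ( (3/2) Ã(r,y)^{1/2} + (1/2) Ã(r,y)^{-3/2} ) ( Ã(r,y) − 1 ) dy ≤ C (v³ + v⁴). -/

import Mathlib

/-!
For `0 ≤ x ≤ 1` we have `(3/4) x ≤ sin x ≤ x`, so on the range `0 ≤ r y ≤ 1` the quantity
`Ã - 1 = 2 sin²(ry) / r²` lies between `y²` and `2 y²`, uniformly in `r`. Since `Ã ≥ 1`, the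
prefactor `(3/2) Ã^{1/2} + (1/2) Ã^{-3/2}` lies between `(3/2) √Ã` and `2 √Ã`, and `√Ã` is
comparable to `1 + y`. Hence the integrand is comparable to `y² + y³`, whose integral over `[0, v]`
is of order `v³ + v⁴`.
-/
open Real Set

/-- `Ã(r,y) = 1 + 2 sin²(ry) / r²`. -/
noncomputable def Atil (r y : ℝ) : ℝ := 1 + 2 * Real.sin (r * y) ^ 2 / r ^ 2

lemma three_quarters_mul_le_sin {x : ℝ} (hx0 : 0 ≤ x) (hx1 : x ≤ 1) : 3 / 4 * x ≤ sin x := by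
  rcases hx0.eq_or_lt with rfl | hx
  · simp
  · nlinarith [sin_gt_sub_cube hx, mul_nonneg hx0 (mul_nonneg hx0 hx0)]

lemma one_le_Atil (r y : ℝ) : 1 ≤ Atil r y := by
  unfold Atil
  linarith [show 0 ≤ 2 * sin (r * y) ^ 2 / r ^ 2 by positivity]

lemma Atil_sub_one_le (r y : ℝ) : Atil r y - 1 ≤ 2 * y ^ 2 := by
  rcases eq_or_ne r 0 with rfl | hr
  · simp [Atil]; positivity
  · have hsin : sin (r * y) ^ 2 ≤ r ^ 2 * y ^ 2 := mul_pow r y 2 ▸ sin_sq_le_sq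
    rw [Atil, add_sub_cancel_left, div_le_iff₀ (by positivity)]
    linarith

lemma sq_le_Atil_sub_one {r y : ℝ} (hr : r ≠ 0) (h0 : 0 ≤ r * y) (h1 : r * y ≤ 1) :
    y ^ 2 ≤ Atil r y - 1 := by
  have hsin := three_quarters_mul_le_sin h0 h1
  rw [Atil, add_sub_cancel_left, le_div_iff₀ (by positivity)]
  nlinarith

lemma continuous_Atil (r : ℝ) : Continuous (Atil r) := by
  unfold Atil; fun_prop

noncomputable def nonlinearity (A : ℝ) : ℝ :=
  ((3/2) * A ^ ((1:ℝ)/2) + (1/2) * A ^ (-(3:ℝ)/2)) * (A - 1)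

lemma three_halves_sqrt_mul_le_nonlinearity {A : ℝ} (hA : 1 ≤ A) :
    3 / 2 * √A * (A - 1) ≤ nonlinearity A := by
  have hpos : 0 < A ^ (-(3:ℝ)/2) := rpow_pos_of_pos (by linarith) _
  rw [nonlinearity, ← sqrt_eq_rpow]
  nlinarith

lemma nonlinearity_le_two_sqrt_mul {A : ℝ} (hA : 1 ≤ A) :
    nonlinearity A ≤ 2 * √A * (A - 1) := by
  have hle : A ^ (-(3:ℝ)/2) ≤ 1 := rpow_le_one_of_one_le_of_nonpos hA (by norm_num)
  have hsqrt : 1 ≤ √A := one_le_sqrt.2 hA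
  rw [nonlinearity, ← sqrt_eq_rpow]
  nlinarith

lemma continuous_nonlinearity_Atil (r : ℝ) : Continuous fun y ↦ nonlinearity (Atil r y) := by
  have hA := continuous_Atil r
  have hne : ∀ y, Atil r y ≠ 0 := fun y ↦ (one_pos.trans_le (one_le_Atil r y)).ne'
  unfold nonlinearity
  exact ((continuous_const.mul (hA.rpow_const fun y ↦ .inl (hne y))).add
    (continuous_const.mul (hA.rpow_const fun y ↦ .inl (hne y)))).mul (hA.sub continuous_const)

lemma nonlinearity_Atil_ge {r y : ℝ} (hr : r ≠ 0) (hy : 0 ≤ y) (h0 : 0 ≤ r * y)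
    (h1 : r * y ≤ 1) : 3 / 4 * y ^ 2 + 3 / 4 * y ^ 3 ≤ nonlinearity (Atil r y) := by
  have hA := sq_le_Atil_sub_one hr h0 h1
  -- `Atil r y ≥ 1 + y ^ 2 ≥ ((1 + y) / 2) ^ 2`
  have hsqrt : (1 + y) / 2 ≤ √(Atil r y) := by
    rw [le_sqrt (by positivity) (by linarith [one_le_Atil r y])]
    nlinarith [sq_nonneg (1 - y)]
  calc 3 / 4 * y ^ 2 + 3 / 4 * y ^ 3 = 3 / 2 * ((1 + y) / 2) * y ^ 2 := by ring
    _ ≤ 3 / 2 * √(Atil r y) * (Atil r y - 1) := by gcongr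
    _ ≤ nonlinearity (Atil r y) := three_halves_sqrt_mul_le_nonlinearity (one_le_Atil r y)

lemma nonlinearity_Atil_le (r : ℝ) {y : ℝ} (hy : 0 ≤ y) :
    nonlinearity (Atil r y) ≤ 4 * y ^ 2 + 8 * y ^ 3 := by
  have hA := Atil_sub_one_le r y
  have hA1 := one_le_Atil r y
  have hsqrt : √(Atil r y) ≤ 1 + 2 * y := by
    rw [sqrt_le_left (by positivity)]
    nlinarith
  calc nonlinearity (Atil r y) ≤ 2 * √(Atil r y) * (Atil r y - 1) :=
        nonlinearity_le_two_sqrt_mul hA1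
    _ ≤ 2 * (1 + 2 * y) * (2 * y ^ 2) := by gcongr
    _ = 4 * y ^ 2 + 8 * y ^ 3 := by ring

lemma integral_mul_sq_add_mul_cube (a b v : ℝ) :
    ∫ y in (0:ℝ)..v, (a * y ^ 2 + b * y ^ 3) = a * v ^ 3 / 3 + b * v ^ 4 / 4 := by
  rw [intervalIntegral.integral_add (Continuous.intervalIntegrable (by fun_prop) _ _)
    (Continuous.intervalIntegrable (by fun_prop) _ _),
    intervalIntegral.integral_const_mul, intervalIntegral.integral_const_mul,
    integral_pow, integral_pow]
  ring

/-- Small-`r` two-sided asymptotics for the nonlinearity of the `Φ` equation. -/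
theorem small_r_asymptotics_nonlinearity :
    ∃ c : ℝ, 0 < c ∧ ∃ C : ℝ, 0 < C ∧
      ∀ r ∈ Set.Ioc (0:ℝ) (1/2), ∀ v : ℝ, 0 ≤ v → r * v ≤ 1 →
        c * (v ^ 3 + v ^ 4)
            ≤ (∫ y in (0:ℝ)..v,
                ((3/2) * (Atil r y) ^ ((1:ℝ)/2) + (1/2) * (Atil r y) ^ (-(3:ℝ)/2))
                  * (Atil r y - 1)) ∧
        (∫ y in (0:ℝ)..v,
            ((3/2) * (Atil r y) ^ ((1:ℝ)/2) + (1/2) * (Atil r y) ^ (-(3:ℝ)/2))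
              * (Atil r y - 1))
          ≤ C * (v ^ 3 + v ^ 4) := by
  refine ⟨3/16, by norm_num, 2, by norm_num, ?_⟩
  rintro r ⟨hr, -⟩ v hv hrv
  change 3/16 * (v ^ 3 + v ^ 4) ≤ ∫ y in (0:ℝ)..v, nonlinearity (Atil r y) ∧
    ∫ y in (0:ℝ)..v, nonlinearity (Atil r y) ≤ 2 * (v ^ 3 + v ^ 4)
  have hint : IntervalIntegrable (fun y ↦ nonlinearity (Atil r y)) MeasureTheory.volume 0 v :=
    (continuous_nonlinearity_Atil r).intervalIntegrable _ _
  have hpoly (a b : ℝ) :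
      IntervalIntegrable (fun y ↦ a * y ^ 2 + b * y ^ 3) MeasureTheory.volume 0 v :=
    Continuous.intervalIntegrable (by fun_prop) _ _
  have hv3 : 0 ≤ v ^ 3 := by positivity
  have hv4 : 0 ≤ v ^ 4 := by positivity
  constructor
  · calc 3/16 * (v ^ 3 + v ^ 4) ≤ 3/4 * v ^ 3 / 3 + 3/4 * v ^ 4 / 4 := by linarith
      _ = ∫ y in (0:ℝ)..v, (3/4 * y ^ 2 + 3/4 * y ^ 3) :=
          (integral_mul_sq_add_mul_cube _ _ _).symm
      _ ≤ _ := intervalIntegral.integral_mono_on hv (hpoly _ _) hint fun y ⟨hy0, hyv⟩ ↦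
          nonlinearity_Atil_ge hr.ne' hy0 (by positivity) (by nlinarith)
  · calc _ ≤ ∫ y in (0:ℝ)..v, (4 * y ^ 2 + 8 * y ^ 3) :=
          intervalIntegral.integral_mono_on hv hint (hpoly _ _) fun y ⟨hy0, _⟩ ↦
            nonlinearity_Atil_le r hy0
      _ = 4 * v ^ 3 / 3 + 8 * v ^ 4 / 4 := integral_mul_sq_add_mul_cube _ _ _
      _ ≤ 2 * (v ^ 3 + v ^ 4) := by linarith
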